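/- There exists a constant c < ∞ such that for all integers n ≥ 1 and all z ∈ 𝕃 with |z| < n: E^z[|S_{τ_n}|] ≤ n + c·n^{2/3}, and E^z[log|S_{τ_n}|] − log n ≤ c·n^{−1/3}. -/

import Mathlib

open MeasureTheory

noncomputable section

/-- The lattice `𝕃`, the additive subgroup of `ℂ` generated by `1` and `z*`,
i.e. `{j + k z* : j, k ∈ ℤ}`. -/
def lat (zs : ℂ) : AddSubgroup ℂ := AddSubgroup.closure {1, zs}

/-- A mean-zero, isotropic random walk with finite `(3+δ)`-moment on the lattice
`lat zstar`, realized on the canonical space `ℕ → ℂ` of its i.i.d. increments. -/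
structure LatticeWalk where
  /-- the generator `z* ∈ ℂ ∖ ℝ` of the lattice -/
  zstar : ℂ
  zstar_not_real : zstar.im ≠ 0
  /-- the step probability mass function -/
  p : ℂ → ℝ
  p_nonneg : ∀ z, 0 ≤ p z
  p_sum : ∑' z : ℂ, p z = 1
  /-- the support of `p` generates the lattice -/
  p_gen : AddSubgroup.closure {z : ℂ | p z ≠ 0} = lat zstar
  δ : ℝ
  δ_pos : 0 < δ
  σ2 : ℝ
  σ2_pos : 0 < σ2
  mean_zero : ∑' z : ℂ, p z • z = 0
  var_re : ∑' z : ℂ, z.re ^ 2 * p z = σ2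
  var_im : ∑' z : ℂ, z.im ^ 2 * p z = σ2
  cov_zero : ∑' z : ℂ, z.re * z.im * p z = 0
  moment : Summable fun z : ℂ => ‖z‖ ^ (3 + δ) * p z
  /-- the law of the i.i.d. sequence of increments -/
  μ : Measure (ℕ → ℂ)
  prob : IsProbabilityMeasure μ
  indep : ProbabilityTheory.iIndepFun
    (fun n (ω : ℕ → ℂ) => ω n) μ
  dist : ∀ n z, μ {ω | ω n = z} = ENNReal.ofReal (p z)

/-- `T_B = inf{l ≥ 1 : s_l ∈ B}`, valued in `ℕ∞` (`= ∞` if `B` is never hit). -/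
def hitT (s : ℕ → ℂ) (B : Set ℂ) : ℕ∞ :=
  sInf {t : ℕ∞ | ∃ m : ℕ, t = m ∧ 1 ≤ m ∧ s m ∈ B}

/-- `T_B^0 = inf{l ≥ 0 : s_l ∈ B}`, valued in `ℕ∞` (`= ∞` if `B` is never hit). -/
def hitT0 (s : ℕ → ℂ) (B : Set ℂ) : ℕ∞ :=
  sInf {t : ℕ∞ | ∃ m : ℕ, t = m ∧ s m ∈ B}

/-- The position `s_t` of the path at an `ℕ∞`-valued time (junk value `s 0` if `t = ∞`). -/
def stopVal (s : ℕ → ℂ) (t : ℕ∞) : ℂ := s t.toNat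

/-- The random walk path started at `x` built from the increments `ω`:
`S_n = x + X_1 + ⋯ + X_n`. -/
def walkPath (x : ℂ) (ω : ℕ → ℂ) : ℕ → ℂ := fun n => x + ∑ i ∈ Finset.range n, ω i

namespace LatticeWalk

variable (W : LatticeWalk)

/-- `P^x(E)`, for an event `E` about the path `(S_n)_{n ≥ 0}` with `S_0 = x`. -/
def Pr (x : ℂ) (E : Set (ℕ → ℂ)) : ℝ := (W.μ {ω | walkPath x ω ∈ E}).toReal

/-- `E^x[f(S)]`. -/
def Ex (x : ℂ) (f : (ℕ → ℂ) → ℝ) : ℝ := ∫ ω, f (walkPath x ω) ∂W.μ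

/-- The law of the increments of the reversed walk, i.e. of the i.i.d. sequence with step
mass function `p_*(z) = p(-z)`. -/
def μstar : Measure (ℕ → ℂ) := W.μ.map fun ω n => -(ω n)

/-- `P_*^x(E)`, probability under the reversed step distribution. -/
def PrStar (x : ℂ) (E : Set (ℕ → ℂ)) : ℝ := (W.μstar {ω | walkPath x ω ∈ E}).toReal

/-- The discrete disk `𝒞_r = {z ∈ 𝕃 : |z| < r}`. -/
def disk (r : ℝ) : Set ℂ := {z | z ∈ lat W.zstar ∧ ‖z‖ < r}

/-- `τ_r = T^0_{𝒞_r^c}`, the exit time from `𝒞_r`. -/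
def exitTime (r : ℝ) (s : ℕ → ℂ) : ℕ∞ := hitT0 s (W.disk r)ᶜ

/-- The discrete strip `ℒ_r = {z ∈ 𝕃 : |Im z| < r}`. -/
def strip (r : ℝ) : Set ℂ := {z | z ∈ lat W.zstar ∧ |z.im| < r}

/-- `ρ_r = T^0_{ℒ_r^c}`, the exit time from `ℒ_r`. -/
def stripExit (r : ℝ) (s : ℕ → ℂ) : ℕ∞ := hitT0 s (W.strip r)ᶜ

/-- The Green's function `G_B(w,z) = Σ_{j=0}^{T^0_{B^c}-1} P^w(S_j = z)`. -/
def green (B : Set ℂ) (w z : ℂ) : ℝ :=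
  (∑' j : ℕ, W.μ {ω | walkPath w ω j = z ∧ (j : ℕ∞) < hitT0 (walkPath w ω) Bᶜ}).toReal

/-- `G_n = G_{𝒞_n}`. -/
def greenDisk (r : ℝ) (w z : ℂ) : ℝ := W.green (W.disk r) w z

/-- A set `A ⊆ 𝕃` is `(1/κ)`-dense (about the origin) if it meets every annulus
`{jκ ≤ |z| < (j+1)κ}`. -/
def IsKDense (κ : ℕ) (A : Set ℂ) : Prop :=
  A ⊆ lat W.zstar ∧
    ∀ j : ℕ, ∃ z ∈ A, (j * κ : ℝ) ≤ ‖z‖ ∧ ‖z‖ < ((j : ℝ) + 1) * κ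

/-- A minimal `(1/κ)`-dense set: `A = {w_j : j ∈ κℕ}` with `j ≤ |w_j| < j + κ`. -/
def IsMinimalKDense (κ : ℕ) (A : Set ℂ) : Prop :=
  ∃ w : ℕ → ℂ, A = w '' {j : ℕ | κ ∣ j} ∧
    ∀ j : ℕ, κ ∣ j → w j ∈ lat W.zstar ∧ (j : ℝ) ≤ ‖w j‖ ∧
      ‖w j‖ < (j : ℝ) + κ

end LatticeWalk

/-- `A[a,b] = A ∩ (𝒞_b ∖ 𝒞_a) = {z ∈ A : a ≤ |z| < b}` (for `A ⊆ 𝕃`). -/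
def slab (A : Set ℂ) (a b : ℝ) : Set ℂ := {z ∈ A | a ≤ ‖z‖ ∧ ‖z‖ < b}

/-- `κℕ = {κ m : m ∈ ℕ}`, viewed on the real axis of `ℂ`. -/
def kNat (κ : ℕ) : Set ℂ := {z | ∃ m : ℕ, z = (κ : ℂ) * m}

/-- `κℤ`, viewed on the real axis of `ℂ`. -/
def kInt (κ : ℕ) : Set ℂ := {z | ∃ m : ℤ, z = (κ : ℂ) * m}

/-- `κℤ⁺ = {κ m : m > 0}`, viewed on the real axis of `ℂ`. -/
def kIntPos (κ : ℕ) : Set ℂ := {z | ∃ m : ℤ, 0 < m ∧ z = (κ : ℂ) * m}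

/-- `κℤ⁻ = {κ m : m < 0}`, viewed on the real axis of `ℂ`. -/
def kIntNeg (κ : ℕ) : Set ℂ := {z | ∃ m : ℤ, m < 0 ∧ z = (κ : ℂ) * m}

/-- `κ(ℤ ∖ ℤ⁺) = {κ m : m ≤ 0}`, viewed on the real axis of `ℂ`. -/
def kIntNonpos (κ : ℕ) : Set ℂ := {z | ∃ m : ℤ, m ≤ 0 ∧ z = (κ : ℂ) * m}

/-- `κ(a + ℕ) = {κ(a + m) : m ∈ ℕ}`, viewed on the real axis of `ℂ`. -/
def kShift (κ : ℕ) (a : ℤ) : Set ℂ := {z | ∃ m : ℕ, z = (κ : ℂ) * ((a : ℂ) + m)}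

/-- `[a,b]_κ = κℤ ∩ [a, b)`, viewed on the real axis of `ℂ`. -/
def kRange (κ : ℕ) (a b : ℤ) : Set ℂ :=
  {z | ∃ m : ℤ, z = (κ : ℂ) * m ∧ a ≤ κ * m ∧ (κ : ℤ) * m < b}

/-!
The stopped walk `S_{M ∧ τ}` makes `|S|² - 2σ² t` a martingale, so
`|z|² + 2σ² E[M ∧ τ] = E|S_{M ∧ τ}|²`. Having left the disk of radius `r`, the walk sits one jump
`X` away from a point inside, so `|S_{M ∧ τ}| ≤ r + a + (|X| - a)₊` for every truncation level
`a`; since each step is independent of the past, this gives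
`E|S_{M ∧ τ}|² ≤ 2(r + a)² + 2 E[M ∧ τ] E(|X| - a)₊²`, and a fixed `a` with `E(|X| - a)₊² ≤ σ²/2`
yields `E τ = O(r²)`. The same last-jump bound summed over the steps before `τ` (Wald) gives
`E(|S_τ| - r)₊ ≤ a + E[τ] E(|X| - a)₊ ≤ a + O(r²) E|X|³ / a²`, which is `O(r^{2/3})` for
`a = r^{2/3}`. Both estimates follow, the second through `log x ≤ log r + (x - r)₊ / r`.
-/

open scoped ENNReal
open ProbabilityTheory

section AtomicMeasure

variable {α : Type*} [MeasurableSpace α] {ν : Measure α} {s : Set α}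

lemma measure_singleton_eq_zero_of_ae_mem (hν : ∀ᵐ x ∂ν, x ∈ s) {x : α} (hx : x ∉ s) :
    ν {x} = 0 :=
  measure_mono_null (Set.singleton_subset_iff.mpr hx) (ae_iff.mp hν)

variable [MeasurableSingletonClass α]

theorem lintegral_eq_tsum_of_ae_mem (hs : s.Countable) (hν : ∀ᵐ x ∂ν, x ∈ s)
    (f : α → ℝ≥0∞) : ∫⁻ x, f x ∂ν = ∑' x, f x * ν {x} := by
  conv_lhs => rw [← Measure.restrict_eq_self_of_ae_mem hν, lintegral_countable f hs]
  refine tsum_subtype_eq_of_support_subset (f := fun x => f x * ν {x}) fun x hx => ?_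
  by_contra hxs
  simp [measure_singleton_eq_zero_of_ae_mem hν hxs] at hx

theorem integral_eq_tsum_of_ae_mem (hs : s.Countable) (hν : ∀ᵐ x ∂ν, x ∈ s)
    {f : α → ℝ} (hf : Integrable f ν) : ∫ x, f x ∂ν = ∑' x, ν.real {x} * f x := by
  conv_lhs => rw [← Measure.restrict_eq_self_of_ae_mem hν,
    setIntegral_countable f hs hf.integrableOn]
  refine tsum_subtype_eq_of_support_subset (f := fun x => ν.real {x} * f x) fun x hx => ?_
  by_contra hxs
  simp [measureReal_def, measure_singleton_eq_zero_of_ae_mem hν hxs] at hx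

end AtomicMeasure

lemma posPart_sub_pow_mul_le {a x : ℝ} (ha : 0 ≤ a) (hx : 0 ≤ x) {j n : ℕ} (hj : 1 ≤ j)
    (hjn : j ≤ n) : max (x - a) 0 ^ j * a ^ (n - j) ≤ x ^ n := by
  rcases le_or_gt x a with hxa | hax
  · simp [max_eq_right (sub_nonpos.mpr hxa), zero_pow (by omega : j ≠ 0), hx]
  · rw [max_eq_left (by linarith), ← pow_sub_mul_pow x hjn, mul_comm]
    exact mul_le_mul (pow_le_pow_left₀ ha hax.le _) (pow_le_pow_left₀ (by linarith)
      (by linarith) _) (by positivity) (by positivity)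

lemma measurable_posPart_sub_pow (a : ℝ) (j : ℕ) :
    Measurable fun x : ℂ => max (‖x‖ - a) 0 ^ j :=
  ((continuous_norm.sub continuous_const).max continuous_const |>.pow j).measurable

lemma norm_posPart_sub_pow_le {a : ℝ} (ha : 0 ≤ a) (j : ℕ) (x : ℂ) :
    ‖max (‖x‖ - a) 0 ^ j‖ ≤ ‖x‖ ^ j := by
  rw [Real.norm_of_nonneg (by positivity)]
  exact pow_le_pow_left₀ (le_max_right _ _) (max_le (by linarith) (norm_nonneg x)) j

lemma Real.log_le_log_add_posPart_sub_div {r x : ℝ} (hr : 1 ≤ r) (hx : 0 ≤ x) :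
    Real.log x ≤ Real.log r + max (x - r) 0 / r := by
  have hr0 : 0 < r := by linarith
  rcases le_or_gt x r with hxr | hrx
  · rw [max_eq_right (by linarith), zero_div, add_zero]
    rcases hx.eq_or_lt with rfl | hx0
    · simpa using Real.log_nonneg hr
    · exact Real.log_le_log hx0 hxr
  · have hxr := Real.log_le_sub_one_of_pos (div_pos (hr0.trans hrx) hr0)
    rw [Real.log_div (by linarith) hr0.ne'] at hxr
    rw [max_eq_left (by linarith), sub_div, div_self hr0.ne']
    linarith

section PosPart

variable {Ω : Type*} [MeasurableSpace Ω] {μ : Measure Ω} [IsProbabilityMeasure μ]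
  {Y : Ω → ℝ} {r : ℝ}

lemma integral_le_add_integral_posPart_sub (hY : AEStronglyMeasurable Y μ)
    (hY0 : ∀ ω, 0 ≤ Y ω) (hint : Integrable (fun ω => max (Y ω - r) 0) μ) :
    ∫ ω, Y ω ∂μ ≤ r + ∫ ω, max (Y ω - r) 0 ∂μ := by
  have hle ω : Y ω ≤ r + max (Y ω - r) 0 := by linarith [le_max_left (Y ω - r) 0]
  have hYint : Integrable Y μ := ((integrable_const r).add hint).mono' hY
    (ae_of_all _ fun ω => by simpa [abs_of_nonneg (hY0 ω)] using hle ω)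
  calc ∫ ω, Y ω ∂μ ≤ ∫ ω, (r + max (Y ω - r) 0) ∂μ :=
        integral_mono hYint ((integrable_const r).add hint) hle
    _ = r + ∫ ω, max (Y ω - r) 0 ∂μ := by simp [integral_add (integrable_const r) hint]

lemma integral_log_le_log_add_integral_posPart_sub_div (hr : 1 ≤ r) (hY0 : ∀ ω, 0 ≤ Y ω)
    (hint : Integrable (fun ω => max (Y ω - r) 0) μ) :
    ∫ ω, Real.log (Y ω) ∂μ ≤ Real.log r + (∫ ω, max (Y ω - r) 0 ∂μ) / r := by
  by_cases hlog : Integrable (fun ω => Real.log (Y ω)) μ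
  · calc ∫ ω, Real.log (Y ω) ∂μ ≤ ∫ ω, (Real.log r + max (Y ω - r) 0 / r) ∂μ :=
          integral_mono hlog ((integrable_const _).add (hint.div_const r))
            fun ω => Real.log_le_log_add_posPart_sub_div hr (hY0 ω)
      _ = Real.log r + (∫ ω, max (Y ω - r) 0 ∂μ) / r := by
          simp [integral_add (integrable_const _) (hint.div_const r), integral_div]
  · -- the Bochner integral of a non-integrable function is `0`
    rw [integral_undef hlog]
    have : 0 ≤ ∫ ω, max (Y ω - r) 0 ∂μ := integral_nonneg fun ω => le_max_right _ _
    have := Real.log_nonneg hr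
    positivity

end PosPart

section Paths

lemma hitT0_eq_coe_iff {s : ℕ → ℂ} {B : Set ℂ} {n : ℕ} :
    hitT0 s B = n ↔ s n ∈ B ∧ ∀ i < n, s i ∉ B := by
  constructor
  · intro h
    have hne : {t : ℕ∞ | ∃ m : ℕ, t = m ∧ s m ∈ B}.Nonempty := by
      by_contra hem
      rw [Set.not_nonempty_iff_eq_empty] at hem
      simp [hitT0, hem] at h
    obtain ⟨m, hm, hmB⟩ := csInf_mem hne
    rw [← hitT0, h] at hm
    refine ⟨by rwa [Nat.cast_inj.mp hm], fun i hi hiB => ?_⟩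
    have : hitT0 s B ≤ i := sInf_le ⟨i, rfl, hiB⟩
    rw [h] at this
    exact absurd hi (by exact_mod_cast this.not_gt)
  · rintro ⟨hn, hmin⟩
    refine le_antisymm (sInf_le ⟨n, rfl, hn⟩) (le_sInf ?_)
    rintro _ ⟨m, rfl, hm⟩
    exact_mod_cast not_lt.mp fun hmn => hmin m hmn hm

lemma measurable_hitT0 {Ω : Type*} [MeasurableSpace Ω] {S : Ω → ℕ → ℂ}
    (hS : ∀ m, Measurable fun ω => S ω m) {B : Set ℂ} (hB : MeasurableSet B) :
    Measurable fun ω => hitT0 (S ω) B := by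
  refine ENat.measurable_iff.mpr fun n => ?_
  simp only [Set.preimage, Set.mem_singleton_iff, hitT0_eq_coe_iff, Set.ofPred_and,
    Set.ofPred_forall]
  exact (hS n hB).inter (.iInter fun i => .iInter fun _ => (hS i hB).compl)

lemma measurable_stopVal {Ω : Type*} [MeasurableSpace Ω] {S : Ω → ℕ → ℂ}
    (hS : ∀ m, Measurable fun ω => S ω m) {T : Ω → ℕ∞} (hT : Measurable T) :
    Measurable fun ω => stopVal (S ω) (T ω) :=
  (measurable_from_prod_countable_left (f := fun p : Ω × ℕ∞ => stopVal (S p.1) p.2)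
    fun t => hS t.toNat).comp (measurable_id.prodMk hT)

lemma walkPath_zero (z : ℂ) (ω : ℕ → ℂ) : walkPath z ω 0 = z := by simp [walkPath]

lemma walkPath_succ (z : ℂ) (ω : ℕ → ℂ) (m : ℕ) :
    walkPath z ω (m + 1) = walkPath z ω m + ω m := by
  simp [walkPath, Finset.sum_range_succ, add_assoc]

lemma measurable_walkPath (z : ℂ) (m : ℕ) : Measurable fun ω => walkPath z ω m :=
  measurable_const.add (Finset.measurable_sum _ fun i _ => measurable_pi_apply i)

lemma dependsOn_walkPath (z : ℂ) (m : ℕ) :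
    DependsOn (fun ω => walkPath z ω m) (Set.Iio m) := fun ω ω' h => by
  simp only [walkPath]
  exact congrArg _ (Finset.sum_congr rfl fun i hi => h i (by simpa using hi))

end Paths

/-- `{τ_D > m}` for the walk started at `z`. -/
def staysIn (z : ℂ) (D : Set ℂ) (m : ℕ) : Set (ℕ → ℂ) :=
  {ω | ∀ i ≤ m, walkPath z ω i ∈ D}

/-- `S_{M ∧ τ_D}`. -/
def stoppedWalk (z : ℂ) (D : Set ℂ) (M : ℕ) (ω : ℕ → ℂ) : ℂ :=
  z + ∑ m ∈ Finset.range M, (staysIn z D m).indicator (fun ω => ω m) ω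

/-- `S_{τ_D}`, which is `z` if the walk never leaves `D`. -/
def exitPos (z : ℂ) (D : Set ℂ) (ω : ℕ → ℂ) : ℂ :=
  stopVal (walkPath z ω) (hitT0 (walkPath z ω) Dᶜ)

/-- `|S_{(m+1) ∧ τ_D}|² - |S_{m ∧ τ_D}|²`. -/
def normSqIncrement (z : ℂ) (D : Set ℂ) (m : ℕ) : (ℕ → ℂ) → ℝ :=
  (staysIn z D m).indicator fun ω => 2 * ((walkPath z ω m).re * (ω m).re +
    (walkPath z ω m).im * (ω m).im) + Complex.normSq (ω m)

section StoppedWalk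

variable {z : ℂ} {D : Set ℂ} {ω : ℕ → ℂ}

lemma staysIn_anti : Antitone (staysIn z D) := fun _ _ hjk _ hω i hi => hω i (hi.trans hjk)

lemma measurableSet_staysIn (hD : MeasurableSet D) (m : ℕ) : MeasurableSet (staysIn z D m) := by
  simp only [staysIn, Set.ofPred_forall]
  exact .iInter fun i => .iInter fun _ => measurable_walkPath z i hD

lemma dependsOn_indicator_staysIn {β : Type*} [Zero β] (h : ℂ → β) (m : ℕ) :
    DependsOn ((staysIn z D m).indicator fun ω => h (walkPath z ω m)) (Set.Iio m) := by
  intro ω ω' hωω'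
  have hS : ∀ i ≤ m, walkPath z ω i = walkPath z ω' i := fun i hi =>
    dependsOn_walkPath z i fun j hj => hωω' j (lt_of_lt_of_le hj hi)
  have hmem : ω ∈ staysIn z D m ↔ ω' ∈ staysIn z D m :=
    forall₂_congr fun i hi => by rw [hS i hi]
  by_cases hω : ω ∈ staysIn z D m
  · rw [Set.indicator_of_mem hω, Set.indicator_of_mem (hmem.mp hω), hS m le_rfl]
  · rw [Set.indicator_of_notMem hω, Set.indicator_of_notMem (hmem.not.mp hω)]

lemma stoppedWalk_succ (M : ℕ) (ω : ℕ → ℂ) :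
    stoppedWalk z D (M + 1) ω =
      stoppedWalk z D M ω + (staysIn z D M).indicator (fun ω => ω M) ω := by
  simp [stoppedWalk, Finset.sum_range_succ, add_assoc]

lemma stoppedWalk_eq_walkPath {m M : ℕ} (hω : ω ∈ staysIn z D m) (hM : M ≤ m + 1) :
    stoppedWalk z D M ω = walkPath z ω M := by
  refine congrArg _ (Finset.sum_congr rfl fun i hi => ?_)
  exact Set.indicator_of_mem (staysIn_anti (by simp at hi; omega) hω) _

lemma stoppedWalk_cases (M : ℕ) (ω : ℕ → ℂ) :
    stoppedWalk z D M ω = z ∨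
      ∃ m < M, ω ∈ staysIn z D m ∧ stoppedWalk z D M ω = walkPath z ω m + ω m := by
  induction M with
  | zero => simp [stoppedWalk]
  | succ M ih =>
    by_cases hω : ω ∈ staysIn z D M
    · exact .inr ⟨M, M.lt_succ_self, hω, by
        rw [stoppedWalk_eq_walkPath hω le_rfl, walkPath_succ]⟩
    · rw [stoppedWalk_succ, Set.indicator_of_notMem hω, add_zero]
      exact ih.imp_right fun ⟨m, hm, h⟩ => ⟨m, hm.trans M.lt_succ_self, h⟩

lemma exitPos_cases (ω : ℕ → ℂ) : exitPos z D ω = z ∨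
    ∃ m, ω ∈ staysIn z D m ∧ exitPos z D ω = walkPath z ω m + ω m := by
  unfold exitPos
  cases h : hitT0 (walkPath z ω) Dᶜ with
  | top => exact .inl (walkPath_zero z ω)
  | coe n =>
    obtain ⟨-, hmin⟩ := hitT0_eq_coe_iff.mp h
    rw [stopVal, ENat.toNat_natCast]
    cases n with
    | zero => exact .inl (walkPath_zero z ω)
    | succ m =>
      refine .inr ⟨m, fun i hi => not_not.mp (hmin i (by omega)), ?_⟩
      rw [walkPath_succ]

lemma measurable_exitPos (hD : MeasurableSet D) : Measurable (exitPos z D) :=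
  measurable_stopVal (measurable_walkPath z) (measurable_hitT0 (measurable_walkPath z) hD.compl)

lemma normSq_stoppedWalk (M : ℕ) (ω : ℕ → ℂ) :
    Complex.normSq (stoppedWalk z D M ω) =
      Complex.normSq z + ∑ m ∈ Finset.range M, normSqIncrement z D m ω := by
  induction M with
  | zero => simp [stoppedWalk]
  | succ M ih =>
    rw [Finset.sum_range_succ, ← add_assoc, ← ih, stoppedWalk_succ, normSqIncrement]
    by_cases hω : ω ∈ staysIn z D M
    · simp only [Set.indicator_of_mem hω, stoppedWalk_eq_walkPath hω M.le_succ,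
        Complex.normSq_add, Complex.mul_re, Complex.conj_re, Complex.conj_im]
      ring
    · simp [Set.indicator_of_notMem hω]

lemma norm_walkPath_add_le {r a : ℝ} (hDr : D ⊆ Metric.ball 0 r) {m : ℕ}
    (hω : ω ∈ staysIn z D m) :
    ‖walkPath z ω m + ω m‖ ≤ r + a + max (‖ω m‖ - a) 0 := by
  have hS : ‖walkPath z ω m‖ < r := mem_ball_zero_iff.mp (hDr (hω m le_rfl))
  have := norm_add_le (walkPath z ω m) (ω m)
  have := le_max_left (‖ω m‖ - a) 0
  linarith

lemma normSq_stoppedWalk_le {r a : ℝ} (hDr : D ⊆ Metric.ball 0 r) (hz : ‖z‖ ≤ r)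
    (ha : 0 ≤ a) (M : ℕ) (ω : ℕ → ℂ) :
    Complex.normSq (stoppedWalk z D M ω) ≤ 2 * (r + a) ^ 2 + 2 *
      ∑ m ∈ Finset.range M, (staysIn z D m).indicator 1 ω * max (‖ω m‖ - a) 0 ^ 2 := by
  have hsum_nonneg : 0 ≤ ∑ m ∈ Finset.range M,
      (staysIn z D m).indicator 1 ω * max (‖ω m‖ - a) 0 ^ 2 :=
    Finset.sum_nonneg fun m _ => mul_nonneg (Set.indicator_nonneg (fun _ _ => zero_le_one) _)
      (sq_nonneg _)
  rw [← Complex.sq_norm]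
  rcases stoppedWalk_cases M ω with hY | ⟨m, hm, hω, hY⟩
  · rw [hY]
    nlinarith [norm_nonneg z]
  · have hterm : max (‖ω m‖ - a) 0 ^ 2 ≤ ∑ m ∈ Finset.range M,
        (staysIn z D m).indicator 1 ω * max (‖ω m‖ - a) 0 ^ 2 := by
      simpa [Set.indicator_of_mem hω] using Finset.single_le_sum (f := fun m =>
        (staysIn z D m).indicator 1 ω * max (‖ω m‖ - a) 0 ^ 2)
        (fun m _ => mul_nonneg (Set.indicator_nonneg (fun _ _ => zero_le_one) _) (sq_nonneg _))
        (Finset.mem_range.mpr hm)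
    rw [hY]
    have h0 : 0 ≤ r + a := by linarith [norm_nonneg z]
    have := pow_le_pow_left₀ (norm_nonneg _) (norm_walkPath_add_le (a := a) hDr hω) 2
    nlinarith [sq_nonneg (r + a - max (‖ω m‖ - a) 0)]

lemma ofReal_posPart_norm_exitPos_sub_le {r a : ℝ} (hDr : D ⊆ Metric.ball 0 r)
    (hz : ‖z‖ ≤ r) (ha : 0 ≤ a) (ω : ℕ → ℂ) :
    ENNReal.ofReal (max (‖exitPos z D ω‖ - r) 0) ≤ ENNReal.ofReal a +
      ∑' m, (staysIn z D m).indicator 1 ω * ENNReal.ofReal (max (‖ω m‖ - a) 0) := by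
  rcases exitPos_cases (z := z) (D := D) ω with hX | ⟨m, hω, hX⟩
  · simp [hX, sub_nonpos.mpr hz]
  · calc ENNReal.ofReal (max (‖exitPos z D ω‖ - r) 0)
        ≤ ENNReal.ofReal (a + max (‖ω m‖ - a) 0) := by
          refine ENNReal.ofReal_le_ofReal (max_le ?_ (by positivity))
          linarith [hX ▸ norm_walkPath_add_le (a := a) hDr hω]
      _ = ENNReal.ofReal a +
            (staysIn z D m).indicator 1 ω * ENNReal.ofReal (max (‖ω m‖ - a) 0) := by
          rw [ENNReal.ofReal_add ha (le_max_right _ _), Set.indicator_of_mem hω, Pi.one_apply,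
            one_mul]
      _ ≤ _ := add_le_add le_rfl (ENNReal.le_tsum m)

end StoppedWalk

lemma countable_lat (zs : ℂ) : (lat zs : Set ℂ).Countable :=
  (Set.countable_range fun p : ℤ × ℤ => p.1 • (1 : ℂ) + p.2 • zs).mono fun _ hw => by
    obtain ⟨j, k, rfl⟩ := AddSubgroup.mem_closure_pair.mp hw
    exact ⟨(j, k), rfl⟩

namespace LatticeWalk

variable (W : LatticeWalk)

instance : IsProbabilityMeasure W.μ := W.prob

lemma summable_p : Summable W.p := by
  by_contra h
  simpa [tsum_eq_zero_of_not_summable h] using W.p_sum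

lemma map_eval_singleton (k : ℕ) (x : ℂ) :
    W.μ.map (· k) {x} = ENNReal.ofReal (W.p x) := by
  rw [Measure.map_apply (measurable_pi_apply k) (measurableSet_singleton x)]
  exact W.dist k x

lemma ae_map_eval_mem_support (k : ℕ) :
    ∀ᵐ x ∂W.μ.map (· k), x ∈ Function.support W.p := by
  have hs := W.summable_p.countable_support
  have : IsProbabilityMeasure (W.μ.map (· k)) :=
    Measure.isProbabilityMeasure_map (measurable_pi_apply k).aemeasurable
  refine ae_iff.mpr ((prob_compl_eq_zero_iff hs.measurableSet).mpr ?_)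
  calc W.μ.map (· k) (Function.support W.p)
      = ∑' x : Function.support W.p, ENNReal.ofReal (W.p x) := by
        simpa [map_eval_singleton] using (tsum_measure_preimage_singleton hs (f := id)
          (μ := W.μ.map (· k)) fun y _ => measurableSet_singleton y).symm
    _ = ∑' x, ENNReal.ofReal (W.p x) :=
        tsum_subtype_eq_of_support_subset (f := fun x => ENNReal.ofReal (W.p x)) fun x hx => by
          by_contra h; simp [Function.notMem_support.mp h] at hx
    _ = 1 := by
        rw [← ENNReal.ofReal_tsum_of_nonneg W.p_nonneg W.summable_p, W.p_sum, ENNReal.ofReal_one]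

theorem lintegral_comp_eval (k : ℕ) {f : ℂ → ℝ≥0∞} (hf : Measurable f) :
    ∫⁻ ω, f (ω k) ∂W.μ = ∑' x, f x * ENNReal.ofReal (W.p x) := by
  rw [← lintegral_map hf (measurable_pi_apply k), lintegral_eq_tsum_of_ae_mem
    W.summable_p.countable_support (W.ae_map_eval_mem_support k)]
  simp only [map_eval_singleton]

theorem integrable_comp_eval {E : Type*} [NormedAddCommGroup E] [MeasurableSpace E]
    [BorelSpace E] [SecondCountableTopology E] (k : ℕ) {f : ℂ → E} (hf : Measurable f)
    (hsum : Summable fun x => ‖f x‖ * W.p x) : Integrable (fun ω => f (ω k)) W.μ := by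
  refine ⟨(hf.comp (measurable_pi_apply k)).aestronglyMeasurable, ?_⟩
  rw [hasFiniteIntegral_iff_enorm, W.lintegral_comp_eval k hf.enorm]
  simp_rw [← ofReal_norm, ← ENNReal.ofReal_mul (norm_nonneg _)]
  rw [← ENNReal.ofReal_tsum_of_nonneg (fun x => mul_nonneg (norm_nonneg _) (W.p_nonneg x))
    hsum]
  exact ENNReal.ofReal_lt_top

theorem integral_comp_eval (k : ℕ) {f : ℂ → ℝ} (hf : Measurable f)
    (hsum : Summable fun x => ‖f x‖ * W.p x) :
    ∫ ω, f (ω k) ∂W.μ = ∑' x, f x * W.p x := by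
  have hk := measurable_pi_apply (X := fun _ : ℕ => ℂ) k
  rw [← integral_map hk.aemeasurable hf.aestronglyMeasurable, integral_eq_tsum_of_ae_mem
    W.summable_p.countable_support (W.ae_map_eval_mem_support k)
    ((integrable_map_measure hf.aestronglyMeasurable hk.aemeasurable).mpr
      (W.integrable_comp_eval k hf hsum))]
  simp [measureReal_def, map_eval_singleton, W.p_nonneg, mul_comm]

lemma summable_norm_pow_mul_p {k : ℕ} (hk : k ≤ 3) :
    Summable fun x : ℂ => ‖x‖ ^ k * W.p x := by
  refine (W.summable_p.add W.moment).of_nonneg_of_le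
    (fun x => mul_nonneg (by positivity) (W.p_nonneg x)) fun x => ?_
  have hk' : (k : ℝ) ≤ 3 + W.δ := by
    linarith [W.δ_pos, (show (k : ℝ) ≤ 3 by exact_mod_cast hk)]
  have hpow : ‖x‖ ^ k ≤ 1 + ‖x‖ ^ (3 + W.δ) := by
    rcases le_or_gt ‖x‖ 1 with h | h
    · linarith [pow_le_one₀ (norm_nonneg x) h (n := k), Real.rpow_nonneg (norm_nonneg x) (3 + W.δ)]
    · rw [← Real.rpow_natCast]
      linarith [Real.rpow_le_rpow_of_exponent_le h.le hk']
  nlinarith [W.p_nonneg x]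

lemma summable_norm_mul_p {E : Type*} [SeminormedAddCommGroup E] {f : ℂ → E} {k : ℕ}
    (hk : k ≤ 3) (hf : ∀ x, ‖f x‖ ≤ ‖x‖ ^ k) : Summable fun x => ‖f x‖ * W.p x :=
  (W.summable_norm_pow_mul_p hk).of_nonneg_of_le
    (fun x => mul_nonneg (norm_nonneg _) (W.p_nonneg x))
    fun x => mul_le_mul_of_nonneg_right (hf x) (W.p_nonneg x)

lemma summable_smul_p : Summable fun x : ℂ => W.p x • x :=
  .of_norm <| (W.summable_norm_pow_mul_p (k := 1) (by norm_num)).congr fun x => by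
    rw [norm_smul, Real.norm_of_nonneg (W.p_nonneg x), pow_one, mul_comm]

lemma tsum_re_mul_p : ∑' x : ℂ, x.re * W.p x = 0 := by
  have h := congrArg Complex.re W.mean_zero
  rw [Complex.re_tsum W.summable_smul_p] at h
  simpa [mul_comm] using h

lemma tsum_im_mul_p : ∑' x : ℂ, x.im * W.p x = 0 := by
  have h := congrArg Complex.im W.mean_zero
  rw [Complex.im_tsum W.summable_smul_p] at h
  simpa [mul_comm] using h

lemma tsum_normSq_mul_p : ∑' x : ℂ, Complex.normSq x * W.p x = 2 * W.σ2 := by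
  have hsq (f : ℂ → ℝ) (hf : ∀ x, |f x| ≤ ‖x‖) : Summable fun x => f x ^ 2 * W.p x :=
    (W.summable_norm_mul_p (f := fun x => f x ^ 2) (k := 2) (by norm_num) fun x => by
      simpa [abs_pow] using pow_le_pow_left₀ (abs_nonneg _) (hf x) 2).congr fun x => by
        rw [Real.norm_of_nonneg (sq_nonneg _)]
  simp_rw [Complex.normSq_apply, ← sq, add_mul]
  rw [(hsq _ Complex.abs_re_le_norm).tsum_add (hsq _ Complex.abs_im_le_norm), W.var_re, W.var_im]
  ring

def thirdMoment : ℝ := ∑' x : ℂ, ‖x‖ ^ 3 * W.p x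

lemma thirdMoment_nonneg : 0 ≤ W.thirdMoment :=
  tsum_nonneg fun x => mul_nonneg (by positivity) (W.p_nonneg x)

/-- `E[(|X| - a)₊ ^ j]` for a single step `X`. -/
def tailMoment (j : ℕ) (a : ℝ) : ℝ := ∑' x : ℂ, max (‖x‖ - a) 0 ^ j * W.p x

lemma summable_tailMoment {a : ℝ} (ha : 0 ≤ a) {j : ℕ} (hj3 : j ≤ 3) :
    Summable fun x : ℂ => max (‖x‖ - a) 0 ^ j * W.p x :=
  (W.summable_norm_mul_p hj3 (norm_posPart_sub_pow_le ha j)).congr fun x => by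
    rw [Real.norm_of_nonneg (by positivity)]

lemma tailMoment_nonneg (j : ℕ) (a : ℝ) : 0 ≤ W.tailMoment j a :=
  tsum_nonneg fun x => mul_nonneg (by positivity) (W.p_nonneg x)

lemma tailMoment_le {j : ℕ} (hj : 1 ≤ j) (hj3 : j ≤ 3) {a : ℝ} (ha : 0 < a) :
    W.tailMoment j a ≤ W.thirdMoment / a ^ (3 - j) := by
  rw [thirdMoment, ← tsum_div_const]
  refine (W.summable_tailMoment ha.le hj3).tsum_le_tsum
    (fun x => ?_) ((W.summable_norm_pow_mul_p le_rfl).div_const _)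
  rw [le_div_iff₀ (by positivity), mul_right_comm]
  exact mul_le_mul_of_nonneg_right
    (posPart_sub_pow_mul_le ha.le (norm_nonneg x) hj hj3) (W.p_nonneg x)

/-- Large enough that `E[(|X| - a)₊²] ≤ E|X|³ / a ≤ σ² / 2`. -/
def truncLevel : ℝ := 2 * W.thirdMoment / W.σ2 + 1

lemma truncLevel_pos : 0 < W.truncLevel := by
  have := W.thirdMoment_nonneg; have := W.σ2_pos; unfold truncLevel; positivity

lemma tailMoment_two_truncLevel_le : W.tailMoment 2 W.truncLevel ≤ W.σ2 / 2 := by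
  refine (W.tailMoment_le (by norm_num) (by norm_num) W.truncLevel_pos).trans ?_
  have := W.σ2_pos
  rw [show 3 - 2 = 1 from rfl, pow_one, div_le_div_iff₀ W.truncLevel_pos two_pos, truncLevel,
    mul_add, mul_div_cancel₀ _ this.ne']
  linarith

theorem indepFun_comp_eval {β γ : Type*} [MeasurableSpace β] [MeasurableSpace γ] {k : ℕ}
    {F : (ℕ → ℂ) → β} (hF : Measurable F) (hdep : DependsOn F (Set.Iio k))
    {g : ℂ → γ} (hg : Measurable g) : IndepFun F (fun ω => g (ω k)) W.μ := by
  classical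
  have hind := W.indep.indepFun_finset (Finset.range k) {k} (by simp)
    fun i => measurable_pi_apply i
  -- `F` factors through the coordinates in `range k`, extended by `0` outside
  let e : (Finset.range k → ℂ) → ℕ → ℂ := fun x i =>
    if h : i ∈ Finset.range k then x ⟨i, h⟩ else 0
  have he : Measurable e := measurable_pi_lambda _ fun i => by
    by_cases h : i ∈ Finset.range k
    · simp only [e, dif_pos h]
      exact measurable_pi_apply _
    · simp only [e, dif_neg h]
      exact measurable_const
  have hFe : F = (F ∘ e) ∘ fun ω (i : Finset.range k) => ω i := funext fun ω =>
    hdep fun i hi => by simp only [e, dif_pos (Finset.mem_range.mpr hi)]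
  rw [hFe]
  exact hind.comp (φ := F ∘ e)
    (ψ := fun x : ({k} : Finset ℕ) → ℂ => g (x ⟨k, Finset.mem_singleton_self k⟩))
    (hF.comp he) (hg.comp (measurable_pi_apply _))

theorem lintegral_mul_comp_eval {k : ℕ} {F : (ℕ → ℂ) → ℝ≥0∞} (hF : Measurable F)
    (hdep : DependsOn F (Set.Iio k)) {g : ℂ → ℝ≥0∞} (hg : Measurable g) :
    ∫⁻ ω, F ω * g (ω k) ∂W.μ =
      (∫⁻ ω, F ω ∂W.μ) * ∑' x, g x * ENNReal.ofReal (W.p x) := by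
  rw [← W.lintegral_comp_eval k hg]
  exact lintegral_mul_eq_lintegral_mul_lintegral_of_indepFun hF
    (hg.comp (measurable_pi_apply k)) (W.indepFun_comp_eval hF hdep hg)

theorem integrable_mul_comp_eval {k : ℕ} {F : (ℕ → ℂ) → ℝ} (hF : Measurable F)
    (hdep : DependsOn F (Set.Iio k)) (hFi : Integrable F W.μ) {g : ℂ → ℝ} (hg : Measurable g)
    (hsum : Summable fun x => ‖g x‖ * W.p x) : Integrable (fun ω => F ω * g (ω k)) W.μ :=
  (W.indepFun_comp_eval hF hdep hg).integrable_mul hFi (W.integrable_comp_eval k hg hsum)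

theorem integral_mul_comp_eval {k : ℕ} {F : (ℕ → ℂ) → ℝ} (hF : Measurable F)
    (hdep : DependsOn F (Set.Iio k)) {g : ℂ → ℝ} (hg : Measurable g)
    (hsum : Summable fun x => ‖g x‖ * W.p x) :
    ∫ ω, F ω * g (ω k) ∂W.μ = (∫ ω, F ω ∂W.μ) * ∑' x, g x * W.p x := by
  rw [← W.integral_comp_eval k hg hsum]
  exact (W.indepFun_comp_eval hF hdep hg).integral_fun_mul_eq_mul_integral
    hF.aestronglyMeasurable (hg.comp (measurable_pi_apply k)).aestronglyMeasurable

lemma integrable_walkPath (z : ℂ) (m : ℕ) : Integrable (fun ω => walkPath z ω m) W.μ :=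
  (integrable_const z).add <| integrable_finsetSum _ fun i _ =>
    W.integrable_comp_eval i measurable_id
      (W.summable_norm_mul_p (k := 1) (by norm_num) (by simp))

section ExitTime

variable {z : ℂ} {D : Set ℂ}

lemma measurable_indicator_staysIn {β : Type*} [MeasurableSpace β] [Zero β]
    (hD : MeasurableSet D) {h : ℂ → β} (hh : Measurable h) (m : ℕ) :
    Measurable ((staysIn z D m).indicator fun ω => h (walkPath z ω m)) :=
  (hh.comp (measurable_walkPath z m)).indicator (measurableSet_staysIn hD m)

lemma integrable_indicator_staysIn_mul (hD : MeasurableSet D) {h : ℂ → ℝ} (hh : Measurable h)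
    {m : ℕ} (hint : Integrable (fun ω => h (walkPath z ω m)) W.μ) {g : ℂ → ℝ}
    (hg : Measurable g) (hsum : Summable fun x => ‖g x‖ * W.p x) :
    Integrable (fun ω => (staysIn z D m).indicator (fun ω => h (walkPath z ω m)) ω * g (ω m))
      W.μ :=
  W.integrable_mul_comp_eval (measurable_indicator_staysIn hD hh m)
    (dependsOn_indicator_staysIn h m) (hint.indicator (measurableSet_staysIn hD m)) hg hsum

lemma integral_indicator_staysIn_mul (hD : MeasurableSet D) {h : ℂ → ℝ} (hh : Measurable h)
    (m : ℕ) {g : ℂ → ℝ} (hg : Measurable g) (hsum : Summable fun x => ‖g x‖ * W.p x) :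
    ∫ ω, (staysIn z D m).indicator (fun ω => h (walkPath z ω m)) ω * g (ω m) ∂W.μ =
      (∫ ω, (staysIn z D m).indicator (fun ω => h (walkPath z ω m)) ω ∂W.μ) *
        ∑' x, g x * W.p x :=
  W.integral_mul_comp_eval (measurable_indicator_staysIn hD hh m)
    (dependsOn_indicator_staysIn h m) hg hsum

theorem integral_normSqIncrement (hD : MeasurableSet D) (m : ℕ) :
    Integrable (normSqIncrement z D m) W.μ ∧
      ∫ ω, normSqIncrement z D m ω ∂W.μ = 2 * W.σ2 * W.μ.real (staysIn z D m) := by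
  have hre := W.summable_norm_mul_p (f := Complex.re) (k := 1) (by norm_num)
    fun x => by simpa using Complex.abs_re_le_norm x
  have him := W.summable_norm_mul_p (f := Complex.im) (k := 1) (by norm_num)
    fun x => by simpa using Complex.abs_im_le_norm x
  have hsq := W.summable_norm_mul_p (f := Complex.normSq) (k := 2) (by norm_num)
    fun x => by simp [Complex.sq_norm, abs_of_nonneg (Complex.normSq_nonneg x)]
  have i1 := W.integrable_indicator_staysIn_mul hD Complex.measurable_re
    (W.integrable_walkPath z m).re Complex.measurable_re hre
  have i2 := W.integrable_indicator_staysIn_mul hD Complex.measurable_im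
    (W.integrable_walkPath z m).im Complex.measurable_im him
  have i3 := W.integrable_indicator_staysIn_mul (z := z) (m := m) (h := fun _ => 1) hD
    measurable_const (integrable_const 1) Complex.continuous_normSq.measurable hsq
  have hsplit : normSqIncrement z D m = fun ω =>
      2 * ((staysIn z D m).indicator (fun ω => (walkPath z ω m).re) ω * (ω m).re) +
      2 * ((staysIn z D m).indicator (fun ω => (walkPath z ω m).im) ω * (ω m).im) +
      (staysIn z D m).indicator (fun _ => 1) ω * Complex.normSq (ω m) := by
    ext ω
    by_cases hω : ω ∈ staysIn z D m <;> simp [normSqIncrement, hω]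
    ring
  refine ⟨hsplit ▸ ((i1.const_mul 2).add (i2.const_mul 2)).add i3, ?_⟩
  simp only [hsplit]
  rw [integral_add (by exact (i1.const_mul 2).add (i2.const_mul 2)) i3,
    integral_add (i1.const_mul 2) (i2.const_mul 2), integral_const_mul, integral_const_mul,
    W.integral_indicator_staysIn_mul hD Complex.measurable_re m Complex.measurable_re hre,
    W.integral_indicator_staysIn_mul hD Complex.measurable_im m Complex.measurable_im him,
    W.integral_indicator_staysIn_mul (h := fun _ => 1) hD measurable_const m
      Complex.continuous_normSq.measurable hsq,
    tsum_re_mul_p, tsum_im_mul_p, tsum_normSq_mul_p,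
    integral_indicator_const _ (measurableSet_staysIn hD m), smul_eq_mul]
  ring

theorem integral_normSq_stoppedWalk (hD : MeasurableSet D) (M : ℕ) :
    Integrable (fun ω => Complex.normSq (stoppedWalk z D M ω)) W.μ ∧
      ∫ ω, Complex.normSq (stoppedWalk z D M ω) ∂W.μ =
        Complex.normSq z + 2 * W.σ2 * ∑ m ∈ Finset.range M, W.μ.real (staysIn z D m) := by
  have hint m := (W.integral_normSqIncrement (z := z) hD m).1
  simp only [normSq_stoppedWalk]
  refine ⟨(integrable_const _).add (integrable_finsetSum _ fun m _ => hint m), ?_⟩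
  rw [integral_add (integrable_const _) (integrable_finsetSum _ fun m _ => hint m),
    integral_finsetSum _ fun m _ => hint m, Finset.mul_sum]
  simp [(W.integral_normSqIncrement hD _).2]

theorem sum_measureReal_staysIn_le (hD : MeasurableSet D) {r a : ℝ}
    (hDr : D ⊆ Metric.ball 0 r) (hz : ‖z‖ ≤ r) (ha : 0 ≤ a) (M : ℕ) :
    (W.σ2 - W.tailMoment 2 a) * ∑ m ∈ Finset.range M, W.μ.real (staysIn z D m) ≤
      (r + a) ^ 2 := by
  have hg := measurable_posPart_sub_pow a 2
  have hgsum := W.summable_norm_mul_p (k := 2) (by norm_num) (norm_posPart_sub_pow_le ha 2)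
  have hterm (m : ℕ) := W.integrable_indicator_staysIn_mul (z := z) (m := m)
    (h := fun _ => 1) hD measurable_const (integrable_const 1) hg hgsum
  have hsum := (integrable_finsetSum (Finset.range M) fun m _ => hterm m).const_mul 2
  obtain ⟨hYint, hY⟩ := W.integral_normSq_stoppedWalk (z := z) hD M
  have hbound := integral_mono hYint ((integrable_const _).add hsum)
    (normSq_stoppedWalk_le hDr hz ha M)
  simp only [Pi.add_apply] at hbound
  rw [hY, integral_add (integrable_const _) hsum, integral_const, integral_const_mul,
    integral_finsetSum _ fun m _ => hterm m] at hbound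
  simp only [W.integral_indicator_staysIn_mul (h := fun _ => 1) hD measurable_const _ hg hgsum,
    integral_indicator_const _ (measurableSet_staysIn hD _), probReal_univ, smul_eq_mul,
    one_mul, ← Finset.sum_mul] at hbound
  rw [tailMoment]
  nlinarith [Complex.normSq_nonneg z]

theorem tsum_measure_staysIn_le (hD : MeasurableSet D) {r : ℝ} (hDr : D ⊆ Metric.ball 0 r)
    (hz : ‖z‖ ≤ r) :
    ∑' m, W.μ (staysIn z D m) ≤ ENNReal.ofReal (2 * (r + W.truncLevel) ^ 2 / W.σ2) := by
  refine ENNReal.tsum_le_of_sum_range_le fun M => ?_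
  have hQ := W.sum_measureReal_staysIn_le hD hDr hz W.truncLevel_pos.le M
  have := W.tailMoment_two_truncLevel_le
  have := W.σ2_pos
  rw [← ENNReal.ofReal_toReal (ENNReal.sum_ne_top.mpr fun m _ => measure_ne_top _ _),
    ENNReal.toReal_sum fun m _ => measure_ne_top _ _]
  refine ENNReal.ofReal_le_ofReal ((le_div_iff₀ this).mpr ?_)
  simp only [measureReal_def] at hQ
  nlinarith [Finset.sum_nonneg fun m (_ : m ∈ Finset.range M) =>
    (W.μ (staysIn z D m)).toReal_nonneg]

theorem lintegral_posPart_norm_exitPos_sub_le (hD : MeasurableSet D) {r a : ℝ}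
    (hDr : D ⊆ Metric.ball 0 r) (hz : ‖z‖ ≤ r) (ha : 0 ≤ a) :
    ∫⁻ ω, ENNReal.ofReal (max (‖exitPos z D ω‖ - r) 0) ∂W.μ ≤
      ENNReal.ofReal a + (∑' m, W.μ (staysIn z D m)) * ENNReal.ofReal (W.tailMoment 1 a) := by
  have hg : Measurable fun x : ℂ => ENNReal.ofReal (max (‖x‖ - a) 0) := by
    simpa using (measurable_posPart_sub_pow a 1).ennreal_ofReal
  have hF (m : ℕ) : Measurable ((staysIn z D m).indicator (1 : (ℕ → ℂ) → ℝ≥0∞)) :=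
    measurable_indicator_staysIn (h := fun _ => 1) hD measurable_const m
  have hterm (m : ℕ) : ∫⁻ ω, (staysIn z D m).indicator 1 ω *
      ENNReal.ofReal (max (‖ω m‖ - a) 0) ∂W.μ =
        W.μ (staysIn z D m) * ENNReal.ofReal (W.tailMoment 1 a) := by
    rw [W.lintegral_mul_comp_eval (hF m) (dependsOn_indicator_staysIn (fun _ => 1) m) hg,
      lintegral_indicator_one (measurableSet_staysIn hD m), tailMoment,
      ENNReal.ofReal_tsum_of_nonneg (fun x => mul_nonneg (by positivity) (W.p_nonneg x))
        (W.summable_tailMoment ha (j := 1) (by norm_num))]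
    simp [ENNReal.ofReal_mul]
  calc ∫⁻ ω, ENNReal.ofReal (max (‖exitPos z D ω‖ - r) 0) ∂W.μ
      ≤ ∫⁻ ω, ENNReal.ofReal a +
          ∑' m, (staysIn z D m).indicator 1 ω * ENNReal.ofReal (max (‖ω m‖ - a) 0) ∂W.μ :=
        lintegral_mono (ofReal_posPart_norm_exitPos_sub_le hDr hz ha)
    _ = _ := by
        rw [lintegral_add_left measurable_const, lintegral_const, measure_univ, mul_one,
          lintegral_tsum fun m => ?_]
        · simp only [hterm, ENNReal.tsum_mul_right]
        · exact ((hF m).mul (hg.comp (measurable_pi_apply m))).aemeasurable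

theorem integral_posPart_norm_exitPos_sub_le (hD : MeasurableSet D) {r a : ℝ}
    (hDr : D ⊆ Metric.ball 0 r) (hz : ‖z‖ ≤ r) (ha : 0 ≤ a) :
    Integrable (fun ω => max (‖exitPos z D ω‖ - r) 0) W.μ ∧
      ∫ ω, max (‖exitPos z D ω‖ - r) 0 ∂W.μ ≤
        a + 2 * (r + W.truncLevel) ^ 2 / W.σ2 * W.tailMoment 1 a := by
  have hmeas : Measurable fun ω => max (‖exitPos z D ω‖ - r) 0 :=
    ((measurable_exitPos hD).norm.sub_const r).max measurable_const
  have hnn : 0 ≤ᵐ[W.μ] fun ω => max (‖exitPos z D ω‖ - r) 0 :=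
    ae_of_all _ fun _ => le_max_right _ _
  have hK : 0 ≤ 2 * (r + W.truncLevel) ^ 2 / W.σ2 := by have := W.σ2_pos; positivity
  have hL : ∫⁻ ω, ENNReal.ofReal (max (‖exitPos z D ω‖ - r) 0) ∂W.μ ≤
      ENNReal.ofReal (a + 2 * (r + W.truncLevel) ^ 2 / W.σ2 * W.tailMoment 1 a) := by
    rw [ENNReal.ofReal_add ha (mul_nonneg hK (W.tailMoment_nonneg 1 a)), ENNReal.ofReal_mul hK]
    exact (W.lintegral_posPart_norm_exitPos_sub_le hD hDr hz ha).trans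
      (add_le_add le_rfl (mul_le_mul_left (W.tsum_measure_staysIn_le hD hDr hz) _))
  refine ⟨⟨hmeas.aestronglyMeasurable,
    (hasFiniteIntegral_iff_ofReal hnn).mpr (hL.trans_lt ENNReal.ofReal_lt_top)⟩, ?_⟩
  rw [integral_eq_lintegral_of_nonneg_ae hnn hmeas.aestronglyMeasurable]
  exact ENNReal.toReal_le_of_le_ofReal (by positivity [W.tailMoment_nonneg 1 a]) hL

end ExitTime

lemma measurableSet_disk (r : ℝ) : MeasurableSet (W.disk r) :=
  ((countable_lat W.zstar).mono fun _ hw => hw.1).measurableSet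

lemma disk_subset_ball (r : ℝ) : W.disk r ⊆ Metric.ball 0 r :=
  fun _ hw => mem_ball_zero_iff.mpr hw.2

theorem exists_integral_posPart_norm_exitPos_sub_le :
    ∃ c, ∀ n : ℕ, 1 ≤ n → ∀ z : ℂ, ‖z‖ < n →
      Integrable (fun ω => max (‖exitPos z (W.disk n) ω‖ - n) 0) W.μ ∧
        ∫ ω, max (‖exitPos z (W.disk n) ω‖ - n) 0 ∂W.μ ≤
          c * (n : ℝ) ^ ((2 : ℝ) / 3) := by
  have hσ := W.σ2_pos
  have ha0 := W.truncLevel_pos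
  set C := 2 * (1 + W.truncLevel) ^ 2 / W.σ2
  have hC : 0 ≤ C := by positivity
  refine ⟨1 + C * W.thirdMoment, fun n hn z hz => ?_⟩
  have hn1 : (1 : ℝ) ≤ n := by exact_mod_cast hn
  set a := (n : ℝ) ^ ((2 : ℝ) / 3)
  have ha : 0 < a := by positivity
  have ha3 : a ^ 3 = (n : ℝ) ^ 2 := by
    rw [← Real.rpow_natCast, ← Real.rpow_mul (Nat.cast_nonneg n)]
    norm_num
  obtain ⟨hint, hle⟩ := W.integral_posPart_norm_exitPos_sub_le (W.measurableSet_disk n)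
    (W.disk_subset_ball n) hz.le ha.le
  refine ⟨hint, hle.trans ?_⟩
  have htail := W.tailMoment_le (j := 1) le_rfl (by norm_num) ha
  have hK : 2 * ((n : ℝ) + W.truncLevel) ^ 2 / W.σ2 ≤ C * a ^ 3 := calc
    _ ≤ 2 * ((1 + W.truncLevel) * n) ^ 2 / W.σ2 := by gcongr; nlinarith
    _ = C * a ^ 3 := by rw [ha3]; ring
  calc a + 2 * ((n : ℝ) + W.truncLevel) ^ 2 / W.σ2 * W.tailMoment 1 a
      ≤ a + C * a ^ 3 * (W.thirdMoment / a ^ (3 - 1)) := by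
        gcongr
        · exact W.tailMoment_nonneg 1 a
    _ = (1 + C * W.thirdMoment) * a := by
        field_simp
        ring

end LatticeWalk

/-- **Overshoot estimate**: there is a `c < ∞` such that for all `n ≥ 1` and `z ∈ 𝕃` with
`|z| < n`: `E^z[|S_{τ_n}|] ≤ n + c n^{2/3}` and `E^z[log |S_{τ_n}|] - log n ≤ c n^{-1/3}`. -/
theorem overshoot_estimate (W : LatticeWalk) :
    ∃ c : ℝ, ∀ n : ℕ, 1 ≤ n → ∀ z ∈ lat W.zstar, ‖z‖ < n →
      W.Ex z (fun s => ‖stopVal s (W.exitTime n s)‖) ≤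
          n + c * (n : ℝ) ^ ((2 : ℝ) / 3) ∧
        W.Ex z (fun s => Real.log (‖stopVal s (W.exitTime n s)‖)) - Real.log n ≤
          c * (n : ℝ) ^ (-(1 : ℝ) / 3) := by
  obtain ⟨c, hc⟩ := W.exists_integral_posPart_norm_exitPos_sub_le
  refine ⟨c, fun n hn z _ hz => ?_⟩
  obtain ⟨hint, hle⟩ := hc n hn z hz
  have hn1 : (1 : ℝ) ≤ n := by exact_mod_cast hn
  have hX : AEStronglyMeasurable (fun ω => ‖exitPos z (W.disk n) ω‖) W.μ :=
    (measurable_exitPos (W.measurableSet_disk n)).norm.aestronglyMeasurable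
  change ∫ ω, ‖exitPos z (W.disk n) ω‖ ∂W.μ ≤ _ ∧
    ∫ ω, Real.log ‖exitPos z (W.disk n) ω‖ ∂W.μ - _ ≤ _
  refine ⟨(integral_le_add_integral_posPart_sub hX (fun _ => norm_nonneg _) hint).trans
    (by linarith), ?_⟩
  have hpow : (n : ℝ) ^ ((2 : ℝ) / 3) / n = (n : ℝ) ^ (-(1 : ℝ) / 3) := by
    rw [div_eq_iff (by positivity), ← Real.rpow_add_one (by positivity)]
    norm_num
  have := integral_log_le_log_add_integral_posPart_sub_div hn1 (fun _ => norm_nonneg _) hint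
  have := div_le_div_of_nonneg_right hle (by positivity : (0 : ℝ) ≤ n)
  rw [mul_div_assoc, hpow] at this
  linarith
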